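/- Let $G$ be a compact topological group acting freely and continuously on a compact Hausdorff space $X$, and let $f : X \to X$ be a continuous $G$-equivariant map. For the inverse system $\cdots \xrightarrow{f} X \xrightarrow{f} X \xrightarrow{f} X$ indexed by the natural numbers, the orbit space $(\varprojlim X)/G$ is homeomorphic to $\varprojlim (X/G)$, where the bonding maps of the second system are the maps $\overline{f} : X/G \to X/G$ induced by $f$. -/

import Mathlib

/-!
Send the class of a thread `(xₙ)` to the thread of orbits `(G xₙ)`. A compact group acts
properly, so `X/G` is Hausdorff, and the source is a quotient of the compact space of threads;
hence a continuous bijection suffices. Injectivity: by freeness the element `g` with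
`g • yₙ = xₙ` is unique at each level, and equivariance makes the level-`n+1` element work at
level `n`, so one `g` serves for all `n`. Surjectivity: the sequences lifting a given thread of
orbits that are consistent with `f` below level `n` form a decreasing sequence of nonempty closed
subsets of the compact space `X^ℕ`, so some sequence lies in all of them.
-/

open MulAction

/-- The coordinatewise orbit relation of `G` on the inverse limit of the
constant system `⋯ → X → X → X` with bonding map `f`. -/
def seqOrbitSetoid (G : Type*) [Group G] (X : Type*) [TopologicalSpace X]
    [MulAction G X] (f : X → X) :
    Setoid {s : ℕ → X // ∀ n, f (s (n + 1)) = s n} where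
  r x y := ∃ g : G, ∀ n, g • y.1 n = x.1 n
  iseqv := by
    constructor
    · exact fun x => ⟨1, fun n => one_smul _ _⟩
    · rintro x y ⟨g, hg⟩
      exact ⟨g⁻¹, fun n => by rw [← hg n, inv_smul_smul]⟩
    · rintro x y z ⟨g, hg⟩ ⟨g', hg'⟩
      exact ⟨g * g', fun n => by rw [mul_smul, hg' n, hg n]⟩

/-- The map induced by a `G`-equivariant map `f : X → X` on the orbit space. -/
def orbitMapOfEquivariant (G : Type*) [Group G] (X : Type*) [TopologicalSpace X]
    [MulAction G X] (f : X → X) (hequiv : ∀ (g : G) (x : X), f (g • x) = g • f x) :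
    Quotient (orbitRel G X) → Quotient (orbitRel G X) :=
  Quotient.lift (fun x => Quotient.mk (orbitRel G X) (f x)) <| by
    rintro a b hab
    obtain ⟨g, rfl⟩ : ∃ g : G, g • b = a := hab
    exact Quotient.sound ⟨g, (hequiv g b).symm⟩

open Function

section Threads

variable {X Y : Type*} {f : X → X} {g : Y → Y}

theorem iterate_apply_add_of_map_succ_eq {t : ℕ → Y} (ht : ∀ n, g (t (n + 1)) = t n) (n j : ℕ) :
    g^[j] (t (n + j)) = t n := by
  induction j with
  | zero => rfl
  | succ j ih => rw [iterate_succ_apply, ← add_assoc, ht, ih]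

def threadMap {π : X → Y} (hπ : Semiconj π f g) :
    {s : ℕ → X // ∀ n, f (s (n + 1)) = s n} → {t : ℕ → Y // ∀ n, g (t (n + 1)) = t n} :=
  fun s => ⟨π ∘ s.1, fun n => by rw [comp_apply, comp_apply, ← hπ, s.2 n]⟩

theorem exists_lift_forall_lt_map_succ_eq {π : X → Y} (hπ : Semiconj π f g)
    (hπs : Surjective π) {t : ℕ → Y} (ht : ∀ n, g (t (n + 1)) = t n) (n : ℕ) :
    ∃ s : ℕ → X, (∀ k, π (s k) = t k) ∧ ∀ k < n, f (s (k + 1)) = s k := by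
  -- push a lift of `t n` down by iterates of `f`, and lift the later coordinates arbitrarily
  let σ := surjInv hπs
  refine ⟨fun k => if k ≤ n then f^[n - k] (σ (t n)) else σ (t k), fun k => ?_, fun k hk => ?_⟩
    <;> dsimp only
  · split_ifs with hk
    · obtain ⟨j, rfl⟩ := Nat.exists_eq_add_of_le hk
      rw [Nat.add_sub_cancel_left, (hπ.iterate_right j).eq, surjInv_eq hπs,
        iterate_apply_add_of_map_succ_eq ht]
    · exact surjInv_eq hπs (t k)
  · rw [if_pos (Nat.succ_le_of_lt hk), if_pos hk.le, ← iterate_succ_apply' f]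
    congr 1
    omega

variable [TopologicalSpace X] [TopologicalSpace Y]

theorem isClosed_setOf_forall_lt_map_succ_eq [T2Space X] (hf : Continuous f) (n : ℕ) :
    IsClosed {s : ℕ → X | ∀ k < n, f (s (k + 1)) = s k} := by
  simp only [Set.ofPred_forall]
  exact isClosed_biInter fun k _ =>
    isClosed_eq (hf.comp (continuous_apply (k + 1))) (continuous_apply k)

theorem compactSpace_threads [CompactSpace X] [T2Space X] (hf : Continuous f) :
    CompactSpace {s : ℕ → X // ∀ n, f (s (n + 1)) = s n} := by
  have hclosed : IsClosed {s : ℕ → X | ∀ n, f (s (n + 1)) = s n} := by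
    simp only [Set.ofPred_forall]
    exact isClosed_iInter fun n =>
      isClosed_eq (hf.comp (continuous_apply (n + 1))) (continuous_apply n)
  exact isCompact_iff_compactSpace.mp hclosed.isCompact

theorem continuous_threadMap {π : X → Y} (hπ : Semiconj π f g) (hπc : Continuous π) :
    Continuous (threadMap hπ) :=
  (continuous_pi fun n => hπc.comp ((continuous_apply n).comp continuous_subtype_val)).subtype_mk _

theorem threadMap_surjective [CompactSpace X] [T2Space X] [T1Space Y] {π : X → Y}
    (hπ : Semiconj π f g) (hπc : Continuous π) (hπs : Surjective π) (hf : Continuous f) :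
    Surjective (threadMap hπ) := by
  intro t
  let C : ℕ → Set (ℕ → X) := fun n =>
    {s | ∀ k, π (s k) = t.1 k} ∩ {s | ∀ k < n, f (s (k + 1)) = s k}
  have hC_closed : ∀ n, IsClosed (C n) := by
    intro n
    refine IsClosed.inter ?_ (isClosed_setOf_forall_lt_map_succ_eq hf n)
    simp only [Set.ofPred_forall]
    exact isClosed_iInter fun k => isClosed_singleton.preimage (hπc.comp (continuous_apply k))
  have hC_anti : ∀ n, C (n + 1) ⊆ C n := fun n s hs =>
    ⟨hs.1, fun k hk => hs.2 k (hk.trans n.lt_succ_self)⟩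
  obtain ⟨s, hs⟩ := IsCompact.nonempty_iInter_of_sequence_nonempty_isCompact_isClosed C hC_anti
    (exists_lift_forall_lt_map_succ_eq hπ hπs t.2) (hC_closed 0).isCompact hC_closed
  simp only [Set.mem_iInter] at hs
  exact ⟨⟨s, fun k => (hs (k + 1)).2 k k.lt_succ_self⟩, Subtype.ext (funext (hs 0).1)⟩

end Threads

section FreeAction

variable {G X : Type*} [Group G] [MulAction G X]

theorem properSMul_of_compactSpace [TopologicalSpace G] [TopologicalSpace X] [CompactSpace G]
    [CompactSpace X] [T2Space X] [ContinuousSMul G X] : ProperSMul G X :=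
  ⟨((continuous_fst.smul continuous_snd).prodMk continuous_snd).isProperMap⟩

theorem eq_of_smul_eq_smul_of_free (hfree : ∀ (g : G) (x : X), g • x = x → g = 1) {g h : G}
    {x : X} (hx : g • x = h • x) : g = h :=
  inv_mul_eq_one.mp (hfree _ x (by rw [mul_smul, ← hx, inv_smul_smul]))

theorem exists_smul_eq_forall_of_free {f : X → X} (hfree : ∀ (g : G) (x : X), g • x = x → g = 1)
    (hequiv : ∀ (g : G) (x : X), f (g • x) = g • f x) {x y : ℕ → X}
    (hx : ∀ n, f (x (n + 1)) = x n) (hy : ∀ n, f (y (n + 1)) = y n)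
    (h : ∀ n, ∃ g : G, g • y n = x n) : ∃ g : G, ∀ n, g • y n = x n := by
  choose g hg using h
  have hg_succ : ∀ n, g (n + 1) = g n := fun n =>
    eq_of_smul_eq_smul_of_free hfree (x := y n) (by rw [hg n, ← hy n, ← hequiv, hg, hx])
  have hg_const : ∀ n, g n = g 0 := fun n => Nat.rec rfl (fun k ih => (hg_succ k).trans ih) n
  exact ⟨g 0, fun n => hg_const n ▸ hg n⟩

variable [TopologicalSpace X] {f : X → X} (hequiv : ∀ (g : G) (x : X), f (g • x) = g • f x)

theorem semiconj_orbitMapOfEquivariant :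
    Semiconj (Quotient.mk (orbitRel G X)) f (orbitMapOfEquivariant G X f hequiv) :=
  fun _ => rfl

theorem threadMap_orbit_eq_iff (hfree : ∀ (g : G) (x : X), g • x = x → g = 1)
    (x y : {s : ℕ → X // ∀ n, f (s (n + 1)) = s n}) :
    threadMap (semiconj_orbitMapOfEquivariant hequiv) x =
      threadMap (semiconj_orbitMapOfEquivariant hequiv) y ↔ (seqOrbitSetoid G X f).r x y := by
  refine ⟨fun h => exists_smul_eq_forall_of_free hfree hequiv x.2 y.2 fun n => ?_, ?_⟩
  · exact Quotient.exact (congrFun (congrArg Subtype.val h) n)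
  · rintro ⟨g, hg⟩
    exact Subtype.ext (funext fun n => Quotient.sound ⟨g, hg n⟩)

end FreeAction

theorem orbit_space_of_limit_homeomorphic_general (G : Type*) [Group G] [TopologicalSpace G]
    [CompactSpace G]
    (X : Type*) [TopologicalSpace X] [CompactSpace X] [T2Space X]
    [MulAction G X] [ContinuousSMul G X]
    (hfree : ∀ (g : G) (x : X), g • x = x → g = 1)
    (f : X → X) (hf : Continuous f)
    (hequiv : ∀ (g : G) (x : X), f (g • x) = g • f x) :
    Nonempty (Quotient (seqOrbitSetoid G X f) ≃ₜ
      {t : ℕ → Quotient (orbitRel G X) //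
        ∀ n, orbitMapOfEquivariant G X f hequiv (t (n + 1)) = t n}) := by
  have : ProperSMul G X := properSMul_of_compactSpace
  have : CompactSpace {s : ℕ → X // ∀ n, f (s (n + 1)) = s n} := compactSpace_threads hf
  have hπ := semiconj_orbitMapOfEquivariant hequiv
  let F : Quotient (seqOrbitSetoid G X f) → _ :=
    Quotient.lift (threadMap hπ) fun x y => (threadMap_orbit_eq_iff hequiv hfree x y).2
  have hF_inj : Injective F := fun a b => Quotient.inductionOn₂ a b fun x y h =>
    Quotient.sound ((threadMap_orbit_eq_iff hequiv hfree x y).1 h)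
  have hF_surj : Surjective F :=
    Surjective.of_comp (f := F) (g := Quotient.mk _)
      (threadMap_surjective hπ continuous_quotient_mk' Quotient.mk_surjective hf)
  exact ⟨((continuous_threadMap hπ continuous_quotient_mk').quotient_lift _).homeoOfEquivCompactToT2
    (f := Equiv.ofBijective F ⟨hF_inj, hF_surj⟩)⟩

/-- For a compact group `G` acting freely on a compact Hausdorff space `X` and
a `G`-equivariant map `f : X → X`, the orbit space of the inverse limit of the
system `⋯ → X → X → X` is homeomorphic to the inverse limit of the induced
system `⋯ → X/G → X/G → X/G`. -/
theorem orbit_space_of_limit_homeomorphic (G : Type*) [Group G] [TopologicalSpace G]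
    [IsTopologicalGroup G] [CompactSpace G]
    (X : Type*) [TopologicalSpace X] [CompactSpace X] [T2Space X]
    [MulAction G X] [ContinuousSMul G X]
    (hfree : ∀ (g : G) (x : X), g • x = x → g = 1)
    (f : X → X) (hf : Continuous f)
    (hequiv : ∀ (g : G) (x : X), f (g • x) = g • f x) :
    Nonempty (Quotient (seqOrbitSetoid G X f) ≃ₜ
      {t : ℕ → Quotient (orbitRel G X) //
        ∀ n, orbitMapOfEquivariant G X f hequiv (t (n + 1)) = t n}) :=
  orbit_space_of_limit_homeomorphic_general G X hfree f hf hequiv
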